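/- arXiv:2301.09803 — 2 statements merged into one kernel-verified Lean document; each statement's English description precedes it below -/
import Mathlib

section
/- Let H be a separable real Hilbert space, Y a real Banach space, C ⊆ Y* a nonempty convex weak*-compact set, Φ : H × ℝ^m → Y continuous, and h : H → ℝ convex and continuously differentiable such that for every v* ∈ C the scalarization Φ^h_{v*}(x,z) := v*(Φ(x,z)) + h(x) is convex on H × ℝ^m. Define S(x,z) := sup_{v* ∈ C} Φ^h_{v*}(x,z). Then for every λ > 0 and every (x,z) ∈ H × ℝ^m, the Moreau envelope of the supremum equals the maximum of the Moreau envelopes of the scalarizations: M_λS(x,z) = max_{v* ∈ C} M_λ(Φ^h_{v*})(x,z), where the maximum on the right is attained. (Proposition 2.4.) -/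
/-!
For `v ∈ C` let `D v` be the Moreau envelope of the scalarization `Φ^h_v` at `w = (x, z)`.
Since `v ↦ Φ^h_v(u)` is affine and weak*-continuous, `D` is an infimum of continuous functions,
hence upper semicontinuous, and attains its maximum on the compact set `C` at some `v₀`;
as `S ≥ Φ^h_v`, every `D v` is at most `M_λ S(w)`.

The Moreau objective of `Φ^h_{v₀}` is `λ⁻¹`-strongly convex, so it has a minimiser `u₀`
(minimising sequences are Cauchy) and grows quadratically away from it. Let `v₁ ∈ C` attain
`S(u₀)`. Maximality of `v₀` against the mixtures `(1 - t) v₀ + t v₁ ∈ C`, together with the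
quadratic growth, makes near-minimisers of the mixed objectives converge to `u₀` as `t → 0`,
which yields `Φ^h_{v₁}(u₀) ≤ Φ^h_{v₀}(u₀)`. Hence
`M_λ S(w) ≤ S(u₀) + ‖w - u₀‖² / 2λ = Φ^h_{v₀}(u₀) + ‖w - u₀‖² / 2λ = D v₀`.
-/

open Filter Topology

/-- The Moreau envelope of a function `S : H × E → ℝ` (written in two arguments)
with parameter `lam`, using the Hilbert norm of the product
`‖(x,z) − u‖² = ‖x − u.1‖² + ‖z − u.2‖²`. -/
noncomputable def moreauEnv2 {H E : Type*} [NormedAddCommGroup H] [InnerProductSpace ℝ H]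
    [NormedAddCommGroup E] [InnerProductSpace ℝ E]
    (S : H → E → ℝ) (lam : ℝ) (x : H) (z : E) : ℝ :=
  ⨅ u : H × E, (S u.1 u.2 + (‖x - u.1‖ ^ 2 + ‖z - u.2‖ ^ 2) / (2 * lam))

open Set

section NormedSpace
variable {E : Type*} [NormedAddCommGroup E] [NormedSpace ℝ E]

theorem ConvexOn.sub_div_mul_norm_sub_le {f : E → ℝ} (hf : ConvexOn ℝ univ f) {w : E}
    {r M : ℝ} (hr : 0 < r) (hM : ∀ y, ‖y - w‖ ≤ r → f y ≤ M) (u : E) :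
    f w - (M - f w) / r * ‖u - w‖ ≤ f u := by
  obtain rfl | huw := eq_or_ne u w
  · simp
  set s := ‖u - w‖
  have hs : 0 < s := norm_sub_pos_iff.2 huw
  -- `w` lies on the segment from `u` to the point `y` of the sphere `‖y - w‖ = r` opposite to `u`
  set y := w + (r / s) • (w - u)
  have hy : ‖y - w‖ = r := by
    simp [y, norm_smul, norm_sub_rev w u, abs_of_pos hr, s, hs.ne']
  have hw : (s / (r + s)) • y + (r / (r + s)) • u = w := by
    simp only [y]
    match_scalars <;> field_simp <;> ring
  have h : f ((s / (r + s)) • y + (r / (r + s)) • u) ≤ (s / (r + s)) * f y + (r / (r + s)) * f u :=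
    hf.2 (mem_univ y) (mem_univ u) (by positivity) (by positivity) (by field_simp; ring)
  rw [hw] at h
  have hfy := hM y hy.le
  rw [div_mul_eq_mul_div, sub_le_iff_le_add, ← sub_le_iff_le_add', le_div_iff₀ hr]
  field_simp at h
  nlinarith

theorem ConvexOn.bddBelow_range_add_norm_sub_sq_div {f : E → ℝ} (hf : ConvexOn ℝ univ f)
    {w : E} (hfw : ContinuousAt f w) {lam : ℝ} (hlam : 0 < lam) :
    BddBelow (range fun u => f u + ‖w - u‖ ^ 2 / (2 * lam)) := by
  obtain ⟨δ, hδ, hball⟩ :=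
    Metric.eventually_nhds_iff.1 (hfw.eventually (gt_mem_nhds (lt_add_one (f w))))
  have hlin := hf.sub_div_mul_norm_sub_le (w := w) (half_pos hδ) (M := f w + 1)
    (fun y hy => (hball (by rw [dist_eq_norm]; linarith)).le)
  refine ⟨f w - lam * (2 / δ) ^ 2 / 2, ?_⟩
  rintro _ ⟨u, rfl⟩
  have hu := hlin u
  rw [show (f w + 1 - f w) / (δ / 2) = 2 / δ by ring, norm_sub_rev] at hu
  have hsq : 0 ≤ (‖w - u‖ - lam * (2 / δ)) ^ 2 / (2 * lam) := by positivity
  have hsq_eq : (‖w - u‖ - lam * (2 / δ)) ^ 2 / (2 * lam)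
      = ‖w - u‖ ^ 2 / (2 * lam) - 2 / δ * ‖w - u‖ + lam * (2 / δ) ^ 2 / 2 := by
    field_simp; ring
  linarith

variable {F : E → ℝ} {m : ℝ}

theorem StrongConvexOn.midpoint_le (hF : StrongConvexOn univ m F) (u v : E) :
    F ((1 / 2 : ℝ) • u + (1 / 2 : ℝ) • v) ≤ (F u + F v) / 2 - m / 8 * ‖u - v‖ ^ 2 := by
  have h : F ((1 / 2 : ℝ) • u + (1 / 2 : ℝ) • v)
      ≤ (1 / 2 : ℝ) • F u + (1 / 2 : ℝ) • F v - 1 / 2 * (1 / 2) * (m / 2 * ‖u - v‖ ^ 2) :=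
    hF.2 (mem_univ u) (mem_univ v) (by norm_num) (by norm_num) (by norm_num)
  simp only [smul_eq_mul] at h
  linarith

theorem StrongConvexOn.add_mul_norm_sub_sq_le_of_isMinOn (hF : StrongConvexOn univ m F)
    {u₀ : E} (hmin : IsMinOn F univ u₀) (u : E) :
    F u₀ + m / 4 * ‖u - u₀‖ ^ 2 ≤ F u := by
  have := hmin (mem_univ ((1 / 2 : ℝ) • u + (1 / 2 : ℝ) • u₀))
  linarith [hF.midpoint_le u u₀, this.out]

theorem StrongConvexOn.exists_isMinOn [CompleteSpace E] (hm : 0 < m)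
    (hF : StrongConvexOn univ m F) (hFc : Continuous F) (hFb : BddBelow (range F)) :
    ∃ u₀, IsMinOn F univ u₀ := by
  set I := ⨅ u, F u
  have hI : ∀ v, I ≤ F v := ciInf_le hFb
  have hnear : ∀ n : ℕ, ∃ u, F u < I + 1 / (n + 1) := fun n =>
    exists_lt_of_ciInf_lt (lt_add_of_pos_right I (by positivity))
  choose u hu using hnear
  have hclose : ∀ N n, N ≤ n → ‖u N - u n‖ ^ 2 ≤ 8 / m * (1 / (N + 1)) := by
    intro N n hNn
    have hmono : 1 / ((n : ℝ) + 1) ≤ 1 / (N + 1) := by gcongr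
    have := hF.midpoint_le (u N) (u n)
    rw [div_mul_eq_mul_div, le_div_iff₀' hm]
    linarith [hI ((1 / 2 : ℝ) • u N + (1 / 2 : ℝ) • u n), hu n, hu N]
  have hcauchy : CauchySeq u := by
    refine cauchySeq_of_le_tendsto_0' (fun N => √(8 / m * (1 / (N + 1)))) (fun N n hNn => ?_) ?_
    · rw [dist_eq_norm]
      exact Real.le_sqrt_of_sq_le (hclose N n hNn)
    · simpa using (tendsto_one_div_add_atTop_nhds_zero_nat.const_mul (8 / m)).sqrt
  obtain ⟨u₀, hlim⟩ := cauchySeq_tendsto_of_complete hcauchy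
  have hFu₀ : F u₀ ≤ I := by
    simpa using le_of_tendsto_of_tendsto' ((hFc.tendsto u₀).comp hlim)
      (tendsto_const_nhds.add tendsto_one_div_add_atTop_nhds_zero_nat) fun n => (hu n).le
  exact ⟨u₀, fun v _ => hFu₀.trans (hI v)⟩

theorem StrongConvexOn.apply_le_add_and_norm_sub_sq_le {G : E → ℝ} (hm : 0 < m)
    (hF : StrongConvexOn univ m F) {u₀ : E} (hmin : IsMinOn F univ u₀) {c : ℝ}
    (hc : ∀ u, c ≤ G u) {t : ℝ} (ht₀ : 0 < t) (ht : t ≤ 1 / 2) {u : E}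
    (hu : (1 - t) * F u + t * G u < F u₀ + t ^ 2) :
    G u ≤ F u₀ + t ∧ ‖u - u₀‖ ^ 2 ≤ 8 / m * (t * (F u₀ + t - c)) := by
  have hgr := mul_le_mul_of_nonneg_left (hF.add_mul_norm_sub_sq_le_of_isMinOn hmin u)
    (by linarith : 0 ≤ 1 - t)
  have hcu := mul_le_mul_of_nonneg_left (hc u) ht₀.le
  have hd : 0 ≤ m / 4 * ‖u - u₀‖ ^ 2 := by positivity
  have hd' := mul_le_mul_of_nonneg_right (by linarith : 1 / 2 ≤ 1 - t) hd
  have key : (1 - t) * (m / 4 * ‖u - u₀‖ ^ 2) + t * G u < t * F u₀ + t ^ 2 := by linarith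
  constructor
  · refine (lt_of_mul_lt_mul_left ?_ ht₀.le).le
    nlinarith [mul_nonneg (by linarith : 0 ≤ 1 - t) hd]
  · rw [div_mul_eq_mul_div, le_div_iff₀' hm]
    nlinarith

theorem StrongConvexOn.le_of_forall_iInf_convexCombination_le {G : E → ℝ} (hm : 0 < m)
    (hF : StrongConvexOn univ m F) {u₀ : E} (hmin : IsMinOn F univ u₀)
    (hG : ContinuousAt G u₀) (hGb : BddBelow (range G))
    (hmix : ∀ t ∈ Ioo (0 : ℝ) 1, ⨅ u, ((1 - t) * F u + t * G u) ≤ F u₀) : G u₀ ≤ F u₀ := by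
  obtain ⟨c, hc⟩ := hGb
  have hc' : ∀ u, c ≤ G u := fun u => hc ⟨u, rfl⟩
  have hnear : ∀ t, ∃ u, t ∈ Ioo (0 : ℝ) 1 → (1 - t) * F u + t * G u < F u₀ + t ^ 2 := by
    intro t
    by_cases ht : t ∈ Ioo (0 : ℝ) 1
    · have hbdd : BddBelow (range fun u => (1 - t) * F u + t * G u) := by
        refine ⟨(1 - t) * F u₀ + t * c, ?_⟩
        rintro _ ⟨u, rfl⟩
        have h1 := mul_le_mul_of_nonneg_left (hmin (mem_univ u)).out (sub_nonneg.2 ht.2.le)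
        have h2 := mul_le_mul_of_nonneg_left (hc' u) ht.1.le
        linarith
      obtain ⟨u, hu⟩ := exists_lt_of_ciInf_lt
        ((hmix t ht).trans_lt (lt_add_of_pos_right _ (pow_pos ht.1 2)))
      exact ⟨u, fun _ => hu⟩
    · exact ⟨u₀, fun h => absurd h ht⟩
  choose u hu using hnear
  have hsmall : ∀ᶠ t in 𝓝[>] (0 : ℝ), G (u t) ≤ F u₀ + t ∧
      ‖u t - u₀‖ ^ 2 ≤ 8 / m * (t * (F u₀ + t - c)) := by
    filter_upwards [Ioo_mem_nhdsGT (by norm_num : (0 : ℝ) < 1 / 2)] with t ht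
    exact hF.apply_le_add_and_norm_sub_sq_le hm hmin hc' ht.1 ht.2.le
      (hu t ⟨ht.1, by linarith [ht.2]⟩)
  have hbound : Tendsto (fun t => 8 / m * (t * (F u₀ + t - c))) (𝓝[>] 0) (𝓝 0) := by
    have : Continuous fun t => 8 / m * (t * (F u₀ + t - c)) := by fun_prop
    simpa using (this.tendsto 0).mono_left nhdsWithin_le_nhds
  have hconv : Tendsto u (𝓝[>] 0) (𝓝 u₀) := by
    have hsq := squeeze_zero' (Eventually.of_forall fun t => by positivity)
      (hsmall.mono fun t h => h.2) hbound
    refine tendsto_iff_norm_sub_tendsto_zero.2 ?_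
    simpa [Real.sqrt_sq (norm_nonneg _)] using hsq.sqrt
  have hupper : Tendsto (fun t => F u₀ + t) (𝓝[>] 0) (𝓝 (F u₀)) := by
    simpa using tendsto_const_nhds.add (tendsto_id.mono_left (nhdsWithin_le_nhds (a := (0 : ℝ))))
  exact le_of_tendsto_of_tendsto (hG.tendsto.comp hconv) hupper (hsmall.mono fun t h => h.1)

end NormedSpace

section InnerProductSpace
variable {P : Type*} [NormedAddCommGroup P] [InnerProductSpace ℝ P]

theorem ConvexOn.strongConvexOn_add_norm_sub_sq_div {f : P → ℝ} (hf : ConvexOn ℝ univ f)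
    (w : P) (lam : ℝ) : StrongConvexOn univ lam⁻¹ fun u => f u + ‖w - u‖ ^ 2 / (2 * lam) := by
  rw [strongConvexOn_iff_convex]
  have hlin : ConvexOn ℝ univ ((-lam⁻¹) • innerₛₗ ℝ w) := LinearMap.convexOn _ convex_univ
  have hquad : (fun u => f u + ‖w - u‖ ^ 2 / (2 * lam) - lam⁻¹ / 2 * ‖u‖ ^ 2)
      = fun u => f u + ‖w‖ ^ 2 / (2 * lam) + ((-lam⁻¹) • innerₛₗ ℝ w) u := by
    funext u
    simp only [LinearMap.smul_apply, innerₛₗ_apply_apply, smul_eq_mul, norm_sub_sq_real]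
    ring
  rw [hquad]
  exact (hf.add_const _).add hlin

end InnerProductSpace

section Moreau
variable {P : Type*} [NormedAddCommGroup P]

noncomputable def moreauEnv (f : P → ℝ) (lam : ℝ) (w : P) : ℝ :=
  ⨅ u, (f u + ‖w - u‖ ^ 2 / (2 * lam))

theorem moreauEnv_mono {f g : P → ℝ} (hfg : ∀ u, f u ≤ g u) {lam : ℝ} {w : P}
    (hf : BddBelow (range fun u => f u + ‖w - u‖ ^ 2 / (2 * lam))) :
    moreauEnv f lam w ≤ moreauEnv g lam w :=
  le_ciInf fun u => (ciInf_le hf u).trans (by gcongr; exact hfg u)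

theorem moreauEnv_eq_of_isMinOn {f : P → ℝ} {lam : ℝ} {w u₀ : P}
    (hmin : IsMinOn (fun u => f u + ‖w - u‖ ^ 2 / (2 * lam)) univ u₀) :
    moreauEnv f lam w = f u₀ + ‖w - u₀‖ ^ 2 / (2 * lam) :=
  le_antisymm (ciInf_le ⟨_, by rintro _ ⟨u, rfl⟩; exact hmin (mem_univ u)⟩ u₀)
    (le_ciInf fun u => hmin (mem_univ u))

/-- `H × E` carries the sup norm; the norm used by `moreauEnv2` is that of the Hilbert product
`WithLp 2 (H × E)`. -/
theorem moreauEnv2_eq_moreauEnv {H E : Type*} [NormedAddCommGroup H] [InnerProductSpace ℝ H]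
    [NormedAddCommGroup E] [InnerProductSpace ℝ E] (g : H → E → ℝ) (lam : ℝ) (x : H) (z : E) :
    moreauEnv2 g lam x z
      = moreauEnv (fun u : WithLp 2 (H × E) => g u.fst u.snd) lam (WithLp.toLp 2 (x, z)) := by
  rw [moreauEnv, ← (WithLp.equiv 2 (H × E)).symm.iInf_comp, moreauEnv2]
  congr 1
  funext u
  rw [WithLp.prod_norm_sq_eq_of_L2]
  rfl

end Moreau

section Minimax
variable {P V : Type*} [NormedAddCommGroup P] [InnerProductSpace ℝ P] [AddCommGroup V]
  [Module ℝ V] {K : Set V} {φ : V → P → ℝ}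

theorem apply_le_of_isMaxOn_moreauEnv (hKconv : Convex ℝ K)
    (hφ_affine : ∀ u v v' (a b : ℝ), a + b = 1 → φ (a • v + b • v') u = a * φ v u + b * φ v' u)
    (hφ_conv : ∀ v ∈ K, ConvexOn ℝ univ (φ v)) (hφ_cont : ∀ v ∈ K, Continuous (φ v))
    {lam : ℝ} (hlam : 0 < lam) {w : P} {v₀ : V} (hv₀ : v₀ ∈ K)
    (hv₀max : IsMaxOn (fun v => moreauEnv (φ v) lam w) K v₀) {u₀ : P}
    (hu₀ : IsMinOn (fun u => φ v₀ u + ‖w - u‖ ^ 2 / (2 * lam)) univ u₀) {v₁ : V} (hv₁ : v₁ ∈ K) :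
    φ v₁ u₀ ≤ φ v₀ u₀ := by
  have hstrong := (hφ_conv v₀ hv₀).strongConvexOn_add_norm_sub_sq_div w lam
  have hG := (hφ_conv v₁ hv₁).bddBelow_range_add_norm_sub_sq_div
    (hφ_cont v₁ hv₁).continuousAt (w := w) hlam
  suffices φ v₁ u₀ + ‖w - u₀‖ ^ 2 / (2 * lam) ≤ φ v₀ u₀ + ‖w - u₀‖ ^ 2 / (2 * lam) by linarith
  refine hstrong.le_of_forall_iInf_convexCombination_le (inv_pos.2 hlam) hu₀
    ((hφ_cont v₁ hv₁).add (by fun_prop)).continuousAt hG fun t ht => ?_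
  have hmem : (1 - t) • v₀ + t • v₁ ∈ K :=
    hKconv hv₀ hv₁ (sub_nonneg.2 ht.2.le) ht.1.le (sub_add_cancel 1 t)
  calc ⨅ u, ((1 - t) * (φ v₀ u + ‖w - u‖ ^ 2 / (2 * lam))
        + t * (φ v₁ u + ‖w - u‖ ^ 2 / (2 * lam)))
      = moreauEnv (φ ((1 - t) • v₀ + t • v₁)) lam w := by
        unfold moreauEnv
        congr 1
        funext u
        rw [hφ_affine u v₀ v₁ _ _ (sub_add_cancel 1 t)]
        ring
    _ ≤ moreauEnv (φ v₀) lam w := hv₀max hmem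
    _ = φ v₀ u₀ + ‖w - u₀‖ ^ 2 / (2 * lam) := moreauEnv_eq_of_isMinOn hu₀

theorem isGreatest_moreauEnv_iSup [CompleteSpace P] [TopologicalSpace V] (hK : K.Nonempty)
    (hKconv : Convex ℝ K) (hKc : IsCompact K)
    (hφ_affine : ∀ u v v' (a b : ℝ), a + b = 1 → φ (a • v + b • v') u = a * φ v u + b * φ v' u)
    (hφ_eval : ∀ u, Continuous fun v => φ v u)
    (hφ_conv : ∀ v ∈ K, ConvexOn ℝ univ (φ v)) (hφ_cont : ∀ v ∈ K, Continuous (φ v))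
    {lam : ℝ} (hlam : 0 < lam) (w : P) :
    IsGreatest {r | ∃ v ∈ K, r = moreauEnv (φ v) lam w}
      (moreauEnv (fun u => ⨆ v : K, φ v u) lam w) := by
  have hbdd : ∀ v ∈ K, BddBelow (range fun u => φ v u + ‖w - u‖ ^ 2 / (2 * lam)) :=
    fun v hv => (hφ_conv v hv).bddBelow_range_add_norm_sub_sq_div (hφ_cont v hv).continuousAt hlam
  have hsup : ∀ u, ∃ v ∈ K, (⨆ v' : K, φ v' u) = φ v u ∧ ∀ v' ∈ K, φ v' u ≤ φ v u := by
    intro u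
    obtain ⟨v, hv, hmax⟩ := hKc.exists_isMaxOn hK (hφ_eval u).continuousOn
    exact ⟨v, hv, hmax.iSup_eq hv, fun v' hv' => hmax hv'⟩
  have hle_sup : ∀ v ∈ K, ∀ u, φ v u ≤ ⨆ v' : K, φ v' u := by
    intro v hv u
    obtain ⟨v₁, -, hv₁, hmax⟩ := hsup u
    exact hv₁ ▸ hmax v hv
  have hupper : ∀ v ∈ K, moreauEnv (φ v) lam w ≤ moreauEnv (fun u => ⨆ v : K, φ v u) lam w :=
    fun v hv => moreauEnv_mono (hle_sup v hv) (hbdd v hv)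
  have husc : UpperSemicontinuousOn (fun v => moreauEnv (φ v) lam w) K :=
    upperSemicontinuousOn_ciInf (fun v hv => hbdd v hv)
      fun u => (((hφ_eval u).add continuous_const).upperSemicontinuous).upperSemicontinuousOn _
  obtain ⟨v₀, hv₀, hv₀max⟩ := husc.exists_isMaxOn hK hKc
  obtain ⟨u₀, hu₀⟩ := ((hφ_conv v₀ hv₀).strongConvexOn_add_norm_sub_sq_div w lam).exists_isMinOn
    (inv_pos.2 hlam) ((hφ_cont v₀ hv₀).add (by fun_prop)) (hbdd v₀ hv₀)
  obtain ⟨v₁, hv₁, hSu₀, -⟩ := hsup u₀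
  have hbddS : BddBelow (range fun u => (⨆ v : K, φ v u) + ‖w - u‖ ^ 2 / (2 * lam)) := by
    obtain ⟨c, hc⟩ := hbdd v₀ hv₀
    refine ⟨c, ?_⟩
    rintro _ ⟨u, rfl⟩
    exact (hc ⟨u, rfl⟩).trans (add_le_add_left (hle_sup v₀ hv₀ u) _)
  have hlower : moreauEnv (fun u => ⨆ v : K, φ v u) lam w ≤ moreauEnv (φ v₀) lam w :=
    calc moreauEnv (fun u => ⨆ v : K, φ v u) lam w
        ≤ (⨆ v : K, φ v u₀) + ‖w - u₀‖ ^ 2 / (2 * lam) := ciInf_le hbddS u₀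
      _ ≤ φ v₀ u₀ + ‖w - u₀‖ ^ 2 / (2 * lam) := by
        rw [hSu₀]
        gcongr
        exact apply_le_of_isMaxOn_moreauEnv hKconv hφ_affine hφ_conv hφ_cont hlam hv₀ hv₀max hu₀ hv₁
      _ = moreauEnv (φ v₀) lam w := (moreauEnv_eq_of_isMinOn hu₀).symm
  exact ⟨⟨v₀, hv₀, le_antisymm hlower (hupper v₀ hv₀)⟩, fun r ⟨v, hv, hr⟩ => hr ▸ hupper v hv⟩

end Minimax

theorem stmt3_general {H Y : Type*} [NormedAddCommGroup H] [InnerProductSpace ℝ H] [CompleteSpace H]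
    [NormedAddCommGroup Y] [NormedSpace ℝ Y] {m : ℕ}
    (C : Set (WeakDual ℝ Y)) (hCne : C.Nonempty) (hCconv : Convex ℝ C) (hCcpt : IsCompact C)
    (Φ : H → EuclideanSpace ℝ (Fin m) → Y)
    (hΦ : Continuous fun p : H × EuclideanSpace ℝ (Fin m) => Φ p.1 p.2)
    (h : H → ℝ) (hC1 : ContDiff ℝ 1 h)
    (hscal : ∀ v ∈ C, ConvexOn ℝ Set.univ
      (fun p : H × EuclideanSpace ℝ (Fin m) => v (Φ p.1 p.2) + h p.1))
    (S : H → EuclideanSpace ℝ (Fin m) → ℝ)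
    (hS : ∀ x z, S x z = ⨆ v : C, ((v : WeakDual ℝ Y) (Φ x z) + h x)) :
    ∀ lam : ℝ, 0 < lam → ∀ (x : H) (z : EuclideanSpace ℝ (Fin m)),
      IsGreatest
        {r : ℝ | ∃ v ∈ C, r = moreauEnv2 (fun x' z' => v (Φ x' z') + h x') lam x z}
        (moreauEnv2 S lam x z) := by
  intro lam hlam x z
  let φ : WeakDual ℝ Y → WithLp 2 (H × EuclideanSpace ℝ (Fin m)) → ℝ :=
    fun v u => v (Φ u.fst u.snd) + h u.fst
  have hφ_affine :
      ∀ u v v' (a b : ℝ), a + b = 1 → φ (a • v + b • v') u = a * φ v u + b * φ v' u := by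
    intro u v v' a b hab
    change a * v _ + b * v' _ + h _ = a * (v _ + h _) + b * (v' _ + h _)
    linear_combination (-h u.fst) * hab
  have hφ_conv : ∀ v ∈ C, ConvexOn ℝ univ (φ v) := fun v hv =>
    (hscal v hv).comp_linearMap (WithLp.linearEquiv 2 ℝ _).toLinearMap
  have hφ_cont : ∀ v ∈ C, Continuous (φ v) := fun v _ =>
    (((v : Y →L[ℝ] ℝ).continuous.comp hΦ).add (hC1.continuous.comp continuous_fst)).comp
      (WithLp.prod_continuous_ofLp 2 _ _)
  have hS' : (fun u : WithLp 2 (H × EuclideanSpace ℝ (Fin m)) => S u.fst u.snd)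
      = fun u => ⨆ v : C, φ v u := funext fun u => hS _ _
  simp only [moreauEnv2_eq_moreauEnv, hS']
  exact isGreatest_moreauEnv_iSup (φ := φ) hCne hCconv hCcpt hφ_affine
    (fun u => (WeakDual.eval_continuous _).add continuous_const) hφ_conv hφ_cont hlam _

/-- Proposition 2.4: the Moreau envelope of the supremum function
`S(x,z) = sup_{v* ∈ C} ( v*(Φ(x,z)) + h(x) )` is the (attained) maximum over `v* ∈ C`
of the Moreau envelopes of the scalarizations `Φ^h_{v*}(x,z) = v*(Φ(x,z)) + h(x)`. -/
theorem stmt3 {H Y : Type*} [NormedAddCommGroup H] [InnerProductSpace ℝ H] [CompleteSpace H]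
    [SecondCountableTopology H]
    [NormedAddCommGroup Y] [NormedSpace ℝ Y] [CompleteSpace Y] {m : ℕ}
    (C : Set (WeakDual ℝ Y)) (hCne : C.Nonempty) (hCconv : Convex ℝ C) (hCcpt : IsCompact C)
    (Φ : H → EuclideanSpace ℝ (Fin m) → Y)
    (hΦ : Continuous fun p : H × EuclideanSpace ℝ (Fin m) => Φ p.1 p.2)
    (h : H → ℝ) (hconv : ConvexOn ℝ Set.univ h) (hC1 : ContDiff ℝ 1 h)
    (hscal : ∀ v ∈ C, ConvexOn ℝ Set.univ
      (fun p : H × EuclideanSpace ℝ (Fin m) => v (Φ p.1 p.2) + h p.1))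
    (S : H → EuclideanSpace ℝ (Fin m) → ℝ)
    (hS : ∀ x z, S x z = ⨆ v : C, ((v : WeakDual ℝ Y) (Φ x z) + h x)) :
    ∀ lam : ℝ, 0 < lam → ∀ (x : H) (z : EuclideanSpace ℝ (Fin m)),
      IsGreatest
        {r : ℝ | ∃ v ∈ C, r = moreauEnv2 (fun x' z' => v (Φ x' z') + h x') lam x z}
        (moreauEnv2 S lam x z) :=
  stmt3_general C hCne hCconv hCcpt Φ hΦ h hC1 hscal S hS
end

section
/- Under the standing assumptions on φ and φ_λ, suppose in addition that h is sequentially weakly continuous on H. Then for every sequence λ_k → 0⁺ and every sequence x_k converging weakly to x in H, limsup_{k→∞} φ_{λ_k}(x_k) ≤ φ(x). (Theorem 3.1(b), weak convergence case.) -/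
/-!
The function `S` is a pointwise supremum of the continuous convex scalarizations
`(x, z) ↦ v (Φ x z) + h x`, `v ∈ C`; the supremum is finite because evaluation is weak-*
continuous and `C` is weak-* compact. Hence `S` is convex and lower semicontinuous, so below
every value `a < S (x₀, z)` it has a continuous affine minorant `c + L₁ x + L₂ z` taking the value
`a` at `(x₀, z)`. Completing the square in the Moreau infimum gives
`M_λ S (x, z) ≥ c + L₁ x + L₂ z - λ (‖L₁‖² + ‖L₂‖²) / 2`. If `M_{λ_k} S (x_k, z) ≤ h (x_k)`
for infinitely many `k`, letting `k → ∞` (with `L₁ (x_k) → L₁ x₀` by weak convergence and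
`h (x_k) → h x₀` by weak continuity of `h`) yields `a ≤ h x₀`, hence `S (x₀, z) ≤ h x₀`.
So the limsup of the events `{M_{λ_k} S (x_k, ξ) ≤ h (x_k)}` lies in `{S (x₀, ξ) ≤ h x₀}`, and
the reverse Fatou inequality for sets concludes.
-/

open Filter Topology MeasureTheory

/-- Weak (sequential) convergence in a Hilbert space: `⟪x_k, y⟫ → ⟪x₀, y⟫` for every `y`. -/
def WeakSeqTendsto {H : Type*} [NormedAddCommGroup H] [InnerProductSpace ℝ H]
    (x : ℕ → H) (x₀ : H) : Prop :=
  ∀ y : H, Tendsto (fun k => (inner ℝ (x k) y : ℝ)) atTop (𝓝 (inner ℝ x₀ y))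

theorem convexOn_ciSup {ι W : Type*} [Nonempty ι] [AddCommMonoid W] [Module ℝ W] {s : Set W}
    {f : ι → W → ℝ} (hf : ∀ i, ConvexOn ℝ s (f i))
    (hbdd : ∀ x, BddAbove (Set.range fun i => f i x)) :
    ConvexOn ℝ s fun x => ⨆ i, f i x := by
  refine ⟨(hf (Classical.arbitrary ι)).1, fun x hx y hy a b ha hb hab => ciSup_le fun i => ?_⟩
  refine ((hf i).2 hx hy ha hb hab).trans (add_le_add ?_ ?_)
  · exact smul_le_smul_of_nonneg_left (le_ciSup (hbdd x) i) ha
  · exact smul_le_smul_of_nonneg_left (le_ciSup (hbdd y) i) hb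

theorem ConvexOn.exists_affine_le_prod_of_lt {W₁ W₂ : Type*} [NormedAddCommGroup W₁]
    [NormedSpace ℝ W₁] [NormedAddCommGroup W₂] [NormedSpace ℝ W₂] {S : W₁ → W₂ → ℝ}
    (hS : ConvexOn ℝ Set.univ fun q : W₁ × W₂ => S q.1 q.2)
    (hSlsc : LowerSemicontinuous fun q : W₁ × W₂ => S q.1 q.2) {x₀ : W₁} {z₀ : W₂} {a : ℝ}
    (ha : a < S x₀ z₀) :
    ∃ (L₁ : StrongDual ℝ W₁) (L₂ : StrongDual ℝ W₂) (c : ℝ),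
      (∀ x z, c + L₁ x + L₂ z ≤ S x z) ∧ c + L₁ x₀ + L₂ z₀ = a := by
  obtain ⟨L, c, hle, heq⟩ := hS.exists_affine_le_of_lt (𝕜 := ℝ) (x := (x₀, z₀))
    (Set.mem_univ _) ha isClosed_univ (hSlsc.lowerSemicontinuousOn _)
  refine ⟨L.comp (.inl ℝ W₁ W₂), L.comp (.inr ℝ W₁ W₂), c, fun x z => ?_, ?_⟩
  · have := hle ⟨(x, z), Set.mem_univ _⟩
    simp only [Set.domRestrict_apply, Pi.add_apply, Function.comp_apply, RCLike.re_to_real,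
      Function.const_apply] at this
    rw [← L.comp_inl_add_comp_inr] at this
    linarith
  · rw [← heq, ← L.comp_inl_add_comp_inr (x₀, z₀), RCLike.re_to_real]
    ring

theorem mul_sub_sq_mul_div_two_le (c t : ℝ) {lam : ℝ} (hlam : 0 < lam) :
    c * t - c ^ 2 * lam / 2 ≤ t ^ 2 / (2 * lam) := by
  rw [le_div_iff₀ (by positivity)]
  nlinarith [sq_nonneg (t - c * lam)]

theorem StrongDual.neg_norm_mul_le {W : Type*} [NormedAddCommGroup W] [NormedSpace ℝ W]
    (L : StrongDual ℝ W) (v : W) : -(‖L‖ * ‖v‖) ≤ L v :=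
  neg_le_of_abs_le (L.le_opNorm v)

theorem WeakSeqTendsto.tendsto_apply {H : Type*} [NormedAddCommGroup H] [InnerProductSpace ℝ H]
    [CompleteSpace H] {x : ℕ → H} {x₀ : H}
    (hx : WeakSeqTendsto x x₀) (L : StrongDual ℝ H) :
    Tendsto (fun k => L (x k)) atTop (𝓝 (L x₀)) := by
  simpa only [real_inner_comm ((InnerProductSpace.toDual ℝ H).symm L),
    InnerProductSpace.toDual_symm_apply] using hx ((InnerProductSpace.toDual ℝ H).symm L)

section MoreauEnvelope

variable {H E : Type*} [NormedAddCommGroup H] [InnerProductSpace ℝ H]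
  [NormedAddCommGroup E] [InnerProductSpace ℝ E] {S : H → E → ℝ}

theorem le_moreauEnv2_infimand_of_affine_le {L₁ : StrongDual ℝ H} {L₂ : StrongDual ℝ E} {c : ℝ}
    (hle : ∀ x z, c + L₁ x + L₂ z ≤ S x z) {lam : ℝ} (hlam : 0 < lam) (x : H) (z : E)
    (u : H × E) :
    c + L₁ x + L₂ z - lam * (‖L₁‖ ^ 2 + ‖L₂‖ ^ 2) / 2
      ≤ S u.1 u.2 + (‖x - u.1‖ ^ 2 + ‖z - u.2‖ ^ 2) / (2 * lam) := by
  have h₁ := L₁.neg_norm_mul_le (u.1 - x)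
  have h₂ := L₂.neg_norm_mul_le (u.2 - z)
  have q₁ := mul_sub_sq_mul_div_two_le ‖L₁‖ ‖u.1 - x‖ hlam
  have q₂ := mul_sub_sq_mul_div_two_le ‖L₂‖ ‖u.2 - z‖ hlam
  rw [map_sub] at h₁ h₂
  rw [norm_sub_rev x, norm_sub_rev z, add_div]
  linarith [hle u.1 u.2]

theorem le_moreauEnv2_of_affine_le {L₁ : StrongDual ℝ H} {L₂ : StrongDual ℝ E} {c : ℝ}
    (hle : ∀ x z, c + L₁ x + L₂ z ≤ S x z) {lam : ℝ} (hlam : 0 < lam) (x : H) (z : E) :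
    c + L₁ x + L₂ z - lam * (‖L₁‖ ^ 2 + ‖L₂‖ ^ 2) / 2 ≤ moreauEnv2 S lam x z :=
  le_ciInf (le_moreauEnv2_infimand_of_affine_le hle hlam x z)

theorem bddBelow_moreauEnv2_infimand (hS : ConvexOn ℝ Set.univ fun q : H × E => S q.1 q.2)
    (hSlsc : LowerSemicontinuous fun q : H × E => S q.1 q.2) {lam : ℝ} (hlam : 0 < lam) (x : H)
    (z : E) :
    BddBelow (Set.range fun u : H × E =>
      S u.1 u.2 + (‖x - u.1‖ ^ 2 + ‖z - u.2‖ ^ 2) / (2 * lam)) := by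
  obtain ⟨L₁, L₂, c, hle, -⟩ := hS.exists_affine_le_prod_of_lt hSlsc (sub_one_lt (S x z))
  exact ⟨_, Set.forall_mem_range.2 (le_moreauEnv2_infimand_of_affine_le hle hlam x z)⟩

theorem measurableSet_moreauEnv2_le [MeasurableSpace E] [OpensMeasurableSpace E]
    (hS : ConvexOn ℝ Set.univ fun q : H × E => S q.1 q.2)
    (hSlsc : LowerSemicontinuous fun q : H × E => S q.1 q.2) {lam : ℝ}
    (hlam : 0 < lam) (x : H) (c : ℝ) : MeasurableSet {z : E | moreauEnv2 S lam x z ≤ c} := by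
  have husc : UpperSemicontinuous (moreauEnv2 S lam x) :=
    upperSemicontinuous_ciInf (bddBelow_moreauEnv2_infimand hS hSlsc hlam x)
      fun u => (by fun_prop : Continuous _).upperSemicontinuous
  exact husc.measurable measurableSet_Iic

theorem le_of_frequently_moreauEnv2_le [CompleteSpace H]
    (hS : ConvexOn ℝ Set.univ fun q : H × E => S q.1 q.2)
    (hSlsc : LowerSemicontinuous fun q : H × E => S q.1 q.2) {h : H → ℝ} {lam : ℕ → ℝ}
    (hlam : ∀ k, 0 < lam k) (hlam0 : Tendsto lam atTop (𝓝 0)) {x : ℕ → H} {x₀ : H}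
    (hx : WeakSeqTendsto x x₀) (hh : Tendsto (fun k => h (x k)) atTop (𝓝 (h x₀))) {z : E}
    (hfreq : ∃ᶠ k in atTop, moreauEnv2 S (lam k) (x k) z ≤ h (x k)) : S x₀ z ≤ h x₀ := by
  refine le_of_forall_lt_imp_le_of_dense fun a ha => ?_
  obtain ⟨L₁, L₂, c, hle, rfl⟩ := hS.exists_affine_le_prod_of_lt hSlsc ha
  have hlow : Tendsto (fun k => c + L₁ (x k) + L₂ z - lam k * (‖L₁‖ ^ 2 + ‖L₂‖ ^ 2) / 2)
      atTop (𝓝 (c + L₁ x₀ + L₂ z)) := by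
    simpa using (((hx.tendsto_apply L₁).const_add c).add_const (L₂ z)).sub
      ((hlam0.mul_const _).div_const 2)
  exact (isClosed_le continuous_fst continuous_snd).mem_of_frequently_of_tendsto
    (hfreq.mono fun k hk => (le_moreauEnv2_of_affine_le hle (hlam k) (x k) z).trans hk)
    (hlow.prodMk_nhds hh)

end MoreauEnvelope

theorem limsup_toReal_measure_le {Ω : Type*} [MeasurableSpace Ω] {μ : Measure Ω}
    [IsFiniteMeasure μ] {A : ℕ → Set Ω} {B : Set Ω} (hA : ∀ k, MeasurableSet (A k))
    (hAB : limsup A atTop ⊆ B) :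
    limsup (fun k => (μ (A k)).toReal) atTop ≤ (μ B).toReal := by
  set T : ℕ → Set Ω := fun N => ⋃ n ≥ N, A n
  have hT : ∀ N, MeasurableSet (T N) := fun N => .iUnion fun n => .iUnion fun _ => hA n
  have hT_anti : Antitone T := fun N N' hN =>
    Set.biUnion_mono (fun n hn => hN.trans hn) fun _ _ => le_rfl
  have hlim : Tendsto (fun N => (μ (T N)).toReal) atTop (𝓝 (μ (limsup A atTop)).toReal) := by
    rw [limsup_eq_iInf_iSup_of_nat]
    exact (ENNReal.tendsto_toReal (measure_ne_top _ _)).comp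
      (tendsto_measure_iInter_atTop (fun N => (hT N).nullMeasurableSet) hT_anti
        ⟨0, measure_ne_top _ _⟩)
  have hle : ∀ N, limsup (fun k => (μ (A k)).toReal) atTop ≤ (μ (T N)).toReal := fun N =>
    limsup_le_of_le (isBoundedUnder_of ⟨0, fun _ => ENNReal.toReal_nonneg⟩).isCoboundedUnder_le
      (eventually_atTop.2 ⟨N, fun k hk => ENNReal.toReal_mono (measure_ne_top _ _)
        (measure_mono (Set.subset_biUnion_of_mem (u := A) hk))⟩)
  exact (ge_of_tendsto hlim (Eventually.of_forall hle)).trans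
    (ENNReal.toReal_mono (measure_ne_top _ _) (measure_mono hAB))

theorem stmt6_general
    {H Y : Type*} [NormedAddCommGroup H] [InnerProductSpace ℝ H] [CompleteSpace H]
    [NormedAddCommGroup Y] [NormedSpace ℝ Y] {m : ℕ}
    {Ω : Type*} [MeasurableSpace Ω] (P : Measure Ω) [IsProbabilityMeasure P]
    (ξ : Ω → EuclideanSpace ℝ (Fin m)) (hξ : Measurable ξ)
    (C : Set (WeakDual ℝ Y)) (hCne : C.Nonempty) (hCcpt : IsCompact C)
    (Φ : H → EuclideanSpace ℝ (Fin m) → Y)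
    (hΦ : Continuous fun q : H × EuclideanSpace ℝ (Fin m) => Φ q.1 q.2)
    (h : H → ℝ) (hC1 : ContDiff ℝ 1 h)
    (hscal : ∀ v ∈ C, ConvexOn ℝ Set.univ
      (fun q : H × EuclideanSpace ℝ (Fin m) => v (Φ q.1 q.2) + h q.1))
    (S : H → EuclideanSpace ℝ (Fin m) → ℝ)
    (hS : ∀ x z, S x z = ⨆ v : C, ((v : WeakDual ℝ Y) (Φ x z) + h x))
    (φ : H → ℝ)
    (hφ : ∀ x, φ x = (P {ω | S x (ξ ω) ≤ h x}).toReal)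
    (φl : ℝ → H → ℝ)
    (hφl : ∀ lam x, φl lam x = (P {ω | moreauEnv2 S lam x (ξ ω) ≤ h x}).toReal)
    (hwk : ∀ (x : ℕ → H) (x₀ : H), WeakSeqTendsto x x₀ →
      Tendsto (fun k => h (x k)) atTop (𝓝 (h x₀))) :
    ∀ lam : ℕ → ℝ, (∀ k, 0 < lam k) → Tendsto lam atTop (𝓝 0) →
    ∀ (x : ℕ → H) (x₀ : H), WeakSeqTendsto x x₀ →
      Filter.limsup (fun k => φl (lam k) (x k)) atTop ≤ φ x₀ := by
  intro lam hlam hlam0 x x₀ hx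
  have : Nonempty C := hCne.to_subtype
  set F : C → H × EuclideanSpace ℝ (Fin m) → ℝ :=
    fun v q => (v : WeakDual ℝ Y) (Φ q.1 q.2) + h q.1
  have hF : ∀ v, Continuous (F v) := fun v =>
    ((map_continuous (v : WeakDual ℝ Y)).comp hΦ).add (hC1.continuous.comp continuous_fst)
  have hbdd : ∀ q, BddAbove (Set.range fun v => F v q) := fun q => by
    have hc : Continuous fun v : WeakDual ℝ Y => v (Φ q.1 q.2) + h q.1 :=
      (WeakDual.eval_continuous _).add continuous_const
    simpa only [Set.image_eq_range] using hCcpt.bddAbove_image hc.continuousOn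
  have hSF : (fun q : H × EuclideanSpace ℝ (Fin m) => S q.1 q.2) = fun q => ⨆ v, F v q :=
    funext fun q => hS q.1 q.2
  have hSconv : ConvexOn ℝ Set.univ fun q : H × EuclideanSpace ℝ (Fin m) => S q.1 q.2 :=
    hSF ▸ convexOn_ciSup (fun v => hscal v v.2) hbdd
  have hSlsc : LowerSemicontinuous fun q : H × EuclideanSpace ℝ (Fin m) => S q.1 q.2 :=
    hSF ▸ lowerSemicontinuous_ciSup hbdd fun v => (hF v).lowerSemicontinuous
  simp only [hφl, hφ]
  refine limsup_toReal_measure_le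
    (fun k => hξ (measurableSet_moreauEnv2_le hSconv hSlsc (hlam k) (x k) _)) fun ω hω => ?_
  exact le_of_frequently_moreauEnv2_le hSconv hSlsc hlam hlam0 hx (hwk x x₀ hx)
    (mem_limsup_iff_frequently_mem.1 hω)

/-- Theorem 3.1(b), weak convergence case: if in addition `h` is sequentially weakly
continuous, then for any `λ_k → 0⁺` and `x_k ⇀ x` weakly, `limsup_k φ_{λ_k}(x_k) ≤ φ(x)`. -/
theorem stmt6
    {H Y : Type*} [NormedAddCommGroup H] [InnerProductSpace ℝ H] [CompleteSpace H]
    [SecondCountableTopology H]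
    [NormedAddCommGroup Y] [NormedSpace ℝ Y] [CompleteSpace Y] {m : ℕ}
    {Ω : Type*} [MeasurableSpace Ω] (P : Measure Ω) [IsProbabilityMeasure P]
    (ξ : Ω → EuclideanSpace ℝ (Fin m)) (hξ : Measurable ξ)
    (hlaw : P.map ξ ≪ volume)
    (K : Set Y) (hKne : K.Nonempty) (hKcl : IsClosed K) (hKconv : Convex ℝ K)
    (hKcone : ∀ c : ℝ, 0 ≤ c → ∀ y ∈ K, c • y ∈ K)
    (C : Set (WeakDual ℝ Y)) (hCne : C.Nonempty) (hCconv : Convex ℝ C) (hCcpt : IsCompact C)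
    (hCgen : closure {w : WeakDual ℝ Y | ∃ c : ℝ, 0 ≤ c ∧ ∃ v ∈ C, w = c • v}
      = {w : WeakDual ℝ Y | ∀ y ∈ K, 0 ≤ w y})
    (Φ : H → EuclideanSpace ℝ (Fin m) → Y)
    (hΦ : Continuous fun q : H × EuclideanSpace ℝ (Fin m) => Φ q.1 q.2)
    (h : H → ℝ) (hconv : ConvexOn ℝ Set.univ h) (hC1 : ContDiff ℝ 1 h)
    (hscal : ∀ v ∈ C, ConvexOn ℝ Set.univ
      (fun q : H × EuclideanSpace ℝ (Fin m) => v (Φ q.1 q.2) + h q.1))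
    (S : H → EuclideanSpace ℝ (Fin m) → ℝ)
    (hS : ∀ x z, S x z = ⨆ v : C, ((v : WeakDual ℝ Y) (Φ x z) + h x))
    (φ : H → ℝ)
    (hφ : ∀ x, φ x = (P {ω | S x (ξ ω) ≤ h x}).toReal)
    (φl : ℝ → H → ℝ)
    (hφl : ∀ lam x, φl lam x = (P {ω | moreauEnv2 S lam x (ξ ω) ≤ h x}).toReal)
    (hwk : ∀ (x : ℕ → H) (x₀ : H), WeakSeqTendsto x x₀ →
      Tendsto (fun k => h (x k)) atTop (𝓝 (h x₀))) :
    ∀ lam : ℕ → ℝ, (∀ k, 0 < lam k) → Tendsto lam atTop (𝓝 0) →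
    ∀ (x : ℕ → H) (x₀ : H), WeakSeqTendsto x x₀ →
      Filter.limsup (fun k => φl (lam k) (x k)) atTop ≤ φ x₀ :=
  stmt6_general P ξ hξ C hCne hCcpt Φ hΦ h hC1 hscal S hS φ hφ φl hφl hwk
end
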